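/- arXiv:math/0604168 — 2 statements merged into one kernel-verified Lean document; each statement's English description precedes it below -/
import Mathlib

section
/- Let M be a rank-n matroid on a ground set S with a modular copoint X such that the cocircuit S \ X spans M. If n ≥ 5, then there exists a cocircuit of M of size at least ⌈n(n+2)/4⌉ which is a flat of the dual matroid M✶ (a ⊥-closed cocircuit). -/
/-- A circuit of a matroid: a minimal dependent set. -/
def Matroid.Circuit {α : Type} (M : Matroid α) (C : Set α) : Prop := Minimal M.Dep C

/-- A cocircuit of a matroid: a circuit of the dual matroid, equivalently the complement
of a copoint. -/
def Matroid.Cocircuit {α : Type} (M : Matroid α) (C : Set α) : Prop := M✶.Circuit C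

/-- The (extended) rank of a set in a matroid: the supremum of the cardinalities of its
independent subsets. -/
noncomputable def Matroid.mrk {α : Type} (M : Matroid α) (X : Set α) : ℕ∞ :=
  ⨆ I ∈ {I | M.Indep I ∧ I ⊆ X}, I.encard

open Set

namespace Matroid

variable {α : Type} {M : Matroid α} {I J S T Z F G : Set α} {e f : α}

lemma le_mrk (hI : M.Indep I) (hIZ : I ⊆ Z) : I.encard ≤ M.mrk Z :=
  le_iSup₂ (f := fun I (_ : I ∈ {I | M.Indep I ∧ I ⊆ Z}) => I.encard) I ⟨hI, hIZ⟩

lemma mrk_le_iff {c : ℕ∞} : M.mrk Z ≤ c ↔ ∀ I, M.Indep I → I ⊆ Z → I.encard ≤ c := by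
  rw [Matroid.mrk, iSup₂_le_iff]
  exact ⟨fun h I hI hIZ => h I ⟨hI, hIZ⟩, fun h I hI => h I hI.1 hI.2⟩

lemma IsBasis'.mrk_eq (hI : M.IsBasis' I Z) : M.mrk Z = I.encard := by
  refine le_antisymm (mrk_le_iff.2 fun J hJ hJZ => ?_) (le_mrk hI.indep hI.subset)
  obtain ⟨J', hJ', hJJ'⟩ := hJ.subset_isBasis'_of_subset hJZ
  have h1 : (M ↾ Z).IsBase J' := isBase_restrict_iff'.2 hJ'
  have h2 : (M ↾ Z).IsBase I := isBase_restrict_iff'.2 hI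
  exact (encard_mono hJJ').trans (h1.encard_eq_encard_of_isBase h2).le

lemma mrk_mono (h : S ⊆ T) : M.mrk S ≤ M.mrk T :=
  mrk_le_iff.2 fun _ hI hIS => le_mrk hI (hIS.trans h)

lemma mrk_le_encard (Z : Set α) : M.mrk Z ≤ Z.encard :=
  mrk_le_iff.2 fun _ _ h => encard_mono h

lemma mrk_closure_eq (M : Matroid α) (Z : Set α) : M.mrk (M.closure Z) = M.mrk Z := by
  obtain ⟨I, hI⟩ := M.exists_isBasis' Z
  rw [hI.mrk_eq, hI.isBasis_closure_right.isBasis'.mrk_eq]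

lemma Indep.mrk_eq (hI : M.Indep I) : M.mrk I = I.encard :=
  hI.isBasis_self.isBasis'.mrk_eq

lemma flat_closure (M : Matroid α) (Z : Set α) : M.IsFlat (M.closure Z) := by
  rw [closure_def]
  have hne : {F | M.IsFlat F ∧ Z ∩ M.E ⊆ F}.Nonempty := ⟨M.E, M.ground_isFlat, inter_subset_right⟩
  haveI := hne.to_subtype
  rw [sInter_eq_iInter]
  exact IsFlat.iInter fun F => F.2.1

lemma mrk_insert_eq (hZ : Z ⊆ M.E) (heE : e ∈ M.E) (hecl : e ∉ M.closure Z) :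
    M.mrk (insert e Z) = M.mrk Z + 1 := by
  obtain ⟨I, hI⟩ := M.exists_isBasis' Z
  have hIcl : M.closure I = M.closure Z := hI.closure_eq_closure
  have heI : e ∉ I := fun h => hecl (hIcl ▸ M.subset_closure I hI.indep.subset_ground h)
  have hind : M.Indep (insert e I) := by
    rw [hI.indep.insert_indep_iff_of_notMem heI]
    exact ⟨heE, fun h => hecl (hIcl ▸ h)⟩
  have hb : M.IsBasis (insert e I) (insert e Z) := by
    refine hind.isBasis_of_subset_of_subset_closure (insert_subset_insert hI.subset) ?_
    refine insert_subset (M.mem_closure_of_mem (mem_insert _ _) hind.subset_ground) ?_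
    calc Z ⊆ M.closure Z := M.subset_closure Z hZ
      _ = M.closure I := hIcl.symm
      _ ⊆ M.closure (insert e I) := M.closure_subset_closure (subset_insert e I)
  rw [hb.isBasis'.mrk_eq, hI.mrk_eq, encard_insert_of_notMem heI]

lemma mrk_union_le (hS : S ⊆ M.E) (hT : T ⊆ M.E) :
    M.mrk (S ∪ T) ≤ M.mrk S + M.mrk T := by
  obtain ⟨I, hI⟩ := M.exists_isBasis' S
  obtain ⟨J, hJ⟩ := M.exists_isBasis' T
  have h1 : S ∪ T ⊆ M.closure (I ∪ J) := by
    have hS' : S ⊆ M.closure I := hI.closure_eq_closure ▸ M.subset_closure S hS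
    have hT' : T ⊆ M.closure J := hJ.closure_eq_closure ▸ M.subset_closure T hT
    exact union_subset (hS'.trans (M.closure_subset_closure subset_union_left))
      (hT'.trans (M.closure_subset_closure subset_union_right))
  calc M.mrk (S ∪ T) ≤ M.mrk (M.closure (I ∪ J)) := mrk_mono h1
    _ = M.mrk (I ∪ J) := M.mrk_closure_eq _
    _ ≤ (I ∪ J).encard := mrk_le_encard _
    _ ≤ I.encard + J.encard := encard_union_le _ _
    _ = M.mrk S + M.mrk T := by rw [hI.mrk_eq, hJ.mrk_eq]

lemma mrk_submod (S T : Set α) : M.mrk (S ∪ T) + M.mrk (S ∩ T) ≤ M.mrk S + M.mrk T := by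
  obtain ⟨I, hI⟩ := M.exists_isBasis' (S ∩ T)
  obtain ⟨J, hJ, hIJ⟩ := hI.indep.subset_isBasis'_of_subset
    (hI.subset.trans (inter_subset_left.trans subset_union_left))
  have hJS : M.Indep (J ∩ S) := hJ.indep.subset inter_subset_left
  have hJT : M.Indep (J ∩ T) := hJ.indep.subset inter_subset_left
  have hu : (J ∩ S) ∪ (J ∩ T) = J := by
    rw [← inter_union_distrib_left]; exact inter_eq_left.2 hJ.subset
  have hi : (J ∩ S) ∩ (J ∩ T) = J ∩ (S ∩ T) := by ext x; simp only [mem_inter_iff]; tauto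
  calc M.mrk (S ∪ T) + M.mrk (S ∩ T) = J.encard + I.encard := by rw [hJ.mrk_eq, hI.mrk_eq]
    _ ≤ J.encard + (J ∩ (S ∩ T)).encard :=
        add_le_add_right (encard_mono (subset_inter hIJ hI.subset)) _
    _ = ((J ∩ S) ∪ (J ∩ T)).encard + ((J ∩ S) ∩ (J ∩ T)).encard := by rw [hu, hi]
    _ = (J ∩ S).encard + (J ∩ T).encard := encard_union_add_encard_inter _ _
    _ ≤ M.mrk S + M.mrk T :=
        add_le_add (le_mrk hJS inter_subset_right) (le_mrk hJT inter_subset_right)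

lemma IsFlat.inter' (hF : M.IsFlat F) (hG : M.IsFlat G) : M.IsFlat (F ∩ G) := by
  have h : M.closure (F ∩ G) = F ∩ G := by
    refine subset_antisymm (subset_inter ?_ ?_)
      (M.subset_closure _ (inter_subset_left.trans hF.subset_ground))
    · exact (M.closure_subset_closure inter_subset_left).trans hF.closure.subset
    · exact (M.closure_subset_closure inter_subset_right).trans hG.closure.subset
  rw [← h]; exact M.flat_closure _

lemma base_of_encard_ge (hI : M.Indep I) (hcard : M.mrk M.E ≤ I.encard)
    (hfin : M.mrk M.E ≠ ⊤) : M.IsBase I := by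
  obtain ⟨B, hB, hIB⟩ := hI.exists_isBase_superset
  have hBcard : B.encard = M.mrk M.E := hB.isBasis_ground.isBasis'.mrk_eq.symm
  have hBfin : B.Finite := by
    rw [← Set.encard_ne_top_iff, hBcard]; exact hfin
  rwa [hBfin.eq_of_subset_of_encard_le' hIB (hBcard.le.trans hcard)]

lemma spanning_of_mrk_ge (hS : S ⊆ M.E) (h : M.mrk M.E ≤ M.mrk S) (hfin : M.mrk M.E ≠ ⊤) :
    M.Spanning S := by
  obtain ⟨I, hI⟩ := M.exists_isBasis' S
  exact ((base_of_encard_ge hI.indep (h.trans_eq hI.mrk_eq) hfin).spanning).superset hI.subset hS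

lemma encard_sprod {s : Set α} (hs : s.Finite) (t : Set α) :
    (s ×ˢ t).encard = s.encard * t.encard := by
  refine Set.Finite.induction_on (motive := fun s _ => (s ×ˢ t).encard = s.encard * t.encard)
    s hs (by simp) ?_
  intro a s has hsfin ih
  have hdisj : Disjoint (Prod.mk a '' t) (s ×ˢ t) := by
    rw [disjoint_left]
    rintro p ⟨y, _, rfl⟩ hp
    exact has hp.1
  have himg : (Prod.mk a '' t).encard = t.encard :=
    Set.InjOn.encard_image (fun x _ y _ h => by simpa using h)
  rw [Set.insert_prod, encard_union_eq hdisj, himg, ih, encard_insert_of_notMem has,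
    add_one_mul, add_comm]

end Matroid

/-- Let `M` be a rank-`n` matroid on ground set `S` with a modular copoint `X` (a modular
flat of rank `n - 1`) such that the cocircuit `S \ X` spans `M`.  If `n ≥ 5`, then `M` has a
cocircuit of size at least `⌈n(n+2)/4⌉` which is a flat of the dual matroid `M✶`
(a `⊥`-closed cocircuit). -/
theorem exists_large_perp_closed_cocircuit {α : Type} (M : Matroid α) (n : ℕ) (hn : 5 ≤ n)
    (hrank : M.mrk M.E = (n : ℕ∞))
    (X : Set α) (hXflat : M.IsFlat X)
    (hXcopoint : M.mrk X = ((n - 1 : ℕ) : ℕ∞))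
    (hXmod : ∀ Y, M.IsFlat Y → M.mrk (X ∪ Y) + M.mrk (X ∩ Y) = M.mrk X + M.mrk Y)
    (hspan : M.Spanning (M.E \ X)) :
    ∃ C : Set α, M.Cocircuit C ∧ ((⌈(n * (n + 2) : ℚ) / 4⌉₊ : ℕ) : ℕ∞) ≤ C.encard ∧
      M✶.IsFlat C := by
  have hXE : X ⊆ M.E := hXflat.subset_ground
  have hEtop : M.mrk M.E ≠ ⊤ := by rw [hrank]; exact ENat.coe_ne_top n
  -- base inside the spanning cocircuit
  obtain ⟨B0, hB0, hB0D⟩ := hspan.exists_isBase_subset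
  have hB0E : B0 ⊆ M.E := hB0.subset_ground
  have hB0card : B0.encard = (n : ℕ∞) := by
    rw [← hrank]; exact hB0.isBasis_ground.isBasis'.mrk_eq.symm
  have hB0i : M.Indep B0 := hB0.indep
  have hB0X : ∀ e ∈ B0, e ∉ X := fun e he => (hB0D he).2
  -- the rank of `X` with one point of the complement added is `n`
  have hins : ∀ e ∈ M.E \ X, M.mrk (insert e X) = (n : ℕ∞) := by
    intro e he
    rw [Matroid.mrk_insert_eq hXE he.1 (by rw [hXflat.closure]; exact he.2), hXcopoint]
    have h1 : n - 1 + 1 = n := by omega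
    exact_mod_cast congrArg (Nat.cast : ℕ → ℕ∞) h1
  -- choice of a nonloop of `X` on each line spanned by two points of `B0`
  have hx : ∀ u v : α, u ∈ B0 → v ∈ B0 → u ≠ v →
      ∃ x, x ∈ X ∧ x ∈ M.closure {u, v} ∧ M.Indep {x} := by
    intro u v hu hv huv
    have hpair : M.Indep {u, v} := hB0i.subset (insert_subset hu (singleton_subset_iff.2 hv))
    have hYflat := M.flat_closure {u, v}
    have hYE : M.closure {u, v} ⊆ M.E := M.closure_subset_ground _
    have hY2 : M.mrk (M.closure {u, v}) = 2 := by
      rw [M.mrk_closure_eq, hpair.mrk_eq, encard_pair huv]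
    have huY : u ∈ M.closure {u, v} := M.subset_closure _ hpair.subset_ground (mem_insert _ _)
    have hXY : M.mrk (X ∪ M.closure {u, v}) = (n : ℕ∞) := by
      refine le_antisymm ((Matroid.mrk_mono (union_subset hXE hYE)).trans hrank.le) ?_
      rw [← hins u ⟨hB0E hu, hB0X u hu⟩]
      exact Matroid.mrk_mono (insert_subset (mem_union_right _ huY) subset_union_left)
    have hmod := hXmod _ hYflat
    rw [hXY, hXcopoint, hY2] at hmod
    have h1 : M.mrk (X ∩ M.closure {u, v}) = 1 := by
      have he : (n : ℕ∞) + M.mrk (X ∩ M.closure {u, v}) = (n : ℕ∞) + 1 := by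
        rw [hmod]
        have h2 : n - 1 + 2 = n + 1 := by omega
        exact_mod_cast congrArg (Nat.cast : ℕ → ℕ∞) h2
      exact WithTop.add_left_cancel (ENat.coe_ne_top n) he
    by_contra hcon
    push_neg at hcon
    have hle : M.mrk (X ∩ M.closure {u, v}) ≤ 0 := by
      refine Matroid.mrk_le_iff.2 fun I hI hIXY => ?_
      rw [nonpos_iff_eq_zero, encard_eq_zero, eq_empty_iff_forall_notMem]
      intro x hxI
      exact hcon x (hIXY hxI).1 (hIXY hxI).2 (hI.subset (singleton_subset_iff.2 hxI))
    rw [h1] at hle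
    norm_num at hle
  choose! xf hxfX hxfcl hxfind using hx
  -- basic properties of the chosen points
  have hxf0 : ∀ u v : α, u ∈ B0 → v ∈ B0 → u ≠ v → xf u v ∉ M.closure ∅ := by
    intro u v hu hv huv hmem
    have h := (hxfind u v hu hv huv).notMem_closure_sdiff_of_mem (mem_singleton _)
    rw [diff_self] at h
    exact h hmem
  -- the chosen points avoid the closure of each single point of `B0`
  have hP1 : ∀ u v w : α, u ∈ B0 → v ∈ B0 → w ∈ B0 → u ≠ v → xf u v ∉ M.closure {w} := by
    intro u v w hu hv hw huv hmem
    have h1 : xf u v ∈ M.closure (insert w ∅) \ M.closure ∅ := by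
      rw [insert_empty_eq]; exact ⟨hmem, hxf0 u v hu hv huv⟩
    have h2 := M.closure_exchange h1
    rw [insert_empty_eq] at h2
    have h3 : M.closure {xf u v} ⊆ X := by
      rw [← hXflat.closure]
      exact M.closure_subset_closure (singleton_subset_iff.2 (hxfX u v hu hv huv))
    exact hB0X w hw (h3 h2.1)
  -- exchange properties
  have hP2 : ∀ u v : α, u ∈ B0 → v ∈ B0 → u ≠ v → v ∈ M.closure {u, xf u v} := by
    intro u v hu hv huv
    have h1 : xf u v ∈ M.closure {v, u} \ M.closure {u} := by
      rw [pair_comm v u]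
      exact ⟨hxfcl u v hu hv huv, hP1 u v u hu hv hu huv⟩
    have h2 := M.closure_exchange (f := v) (X := {u}) h1
    rw [pair_comm (xf u v) u] at h2
    exact h2.1
  have hP2b : ∀ u v : α, u ∈ B0 → v ∈ B0 → u ≠ v → u ∈ M.closure {v, xf u v} := by
    intro u v hu hv huv
    have h1 : xf u v ∈ M.closure {u, v} \ M.closure {v} :=
      ⟨hxfcl u v hu hv huv, hP1 u v v hu hv hv huv⟩
    have h2 := M.closure_exchange (f := u) (X := {v}) h1
    rw [pair_comm (xf u v) v] at h2
    exact h2.1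
  -- distinctness of the chosen points for different lines
  have hdist : ∀ u1 v1 u2 v2 : α, u1 ∈ B0 → v1 ∈ B0 → u2 ∈ B0 → v2 ∈ B0 → u1 ≠ v1 → u2 ≠ v2 →
      ({u1, v1} : Set α) ≠ {u2, v2} → xf u1 v1 ≠ xf u2 v2 := by
    intro u1 v1 u2 v2 hu1 hv1 hu2 hv2 h1 h2 hset heq
    have hx1 : xf u1 v1 ∈ M.closure {u1, v1} := hxfcl u1 v1 hu1 hv1 h1
    have hpsub : ({u1, v1} : Set α) ⊆ M.E :=
      insert_subset (hB0E hu1) (singleton_subset_iff.2 (hB0E hv1))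
    by_cases hv2mem : v2 ∈ ({u2, u1, v1} : Set α)
    · -- then v2 = u1 or v2 = v1; use the second exchange property
      have hv2' : v2 ∈ ({u1, v1} : Set α) := by
        rcases hv2mem with h | h
        · exact (h2 h.symm).elim
        · exact h
      have hu2' : u2 ∉ ({u1, v1} : Set α) := by
        rintro (h | h)
        · -- u2 = u1 : then v2 = v1 and the sets are equal
          rcases hv2' with h' | h'
          · exact h2 ((h.trans h'.symm))
          · exact hset (by rw [h, show v2 = v1 from h'])
        · rw [mem_singleton_iff] at h
          rcases hv2' with h' | h'
          · exact hset (by rw [h, show v2 = u1 from h', pair_comm])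
          · exact h2 (h.trans (mem_singleton_iff.1 h').symm)
      have hb : u2 ∈ M.closure {v2, xf u2 v2} := hP2b u2 v2 hu2 hv2 h2
      rw [← heq] at hb
      have hsub2 : ({v2, xf u1 v1} : Set α) ⊆ M.closure {u1, v1} :=
        insert_subset (M.subset_closure _ hpsub hv2') (singleton_subset_iff.2 hx1)
      have : u2 ∈ M.closure {u1, v1} := Matroid.closure_subset_closure_of_subset_closure hsub2 hb
      have hmono : M.closure {u1, v1} ⊆ M.closure (B0 \ {u2}) := by
        refine M.closure_subset_closure (insert_subset ⟨hu1, ?_⟩ (singleton_subset_iff.2 ⟨hv1, ?_⟩))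
        · simp only [mem_singleton_iff]; rintro rfl; exact hu2' (mem_insert _ _)
        · simp only [mem_singleton_iff]; rintro rfl
          exact hu2' (mem_insert_of_mem _ (mem_singleton _))
      exact hB0i.notMem_closure_sdiff_of_mem hu2 (hmono this)
    · -- v2 not among u2, u1, v1
      have hb : v2 ∈ M.closure {u2, xf u2 v2} := hP2 u2 v2 hu2 hv2 h2
      rw [← heq] at hb
      have hsub2 : ({u2, xf u1 v1} : Set α) ⊆ M.closure {u2, u1, v1} := by
        refine insert_subset (M.subset_closure _ ?_ (mem_insert _ _)) ?_
        · exact insert_subset (hB0E hu2) (insert_subset (hB0E hu1)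
            (singleton_subset_iff.2 (hB0E hv1)))
        · refine singleton_subset_iff.2 ((M.closure_subset_closure ?_) hx1)
          exact insert_subset (mem_insert_of_mem _ (mem_insert _ _))
            (singleton_subset_iff.2 (mem_insert_of_mem _ (mem_insert_of_mem _ (mem_singleton _))))
      have h3 : v2 ∈ M.closure {u2, u1, v1} := Matroid.closure_subset_closure_of_subset_closure hsub2 hb
      have hmono : M.closure {u2, u1, v1} ⊆ M.closure (B0 \ {v2}) := by
        refine M.closure_subset_closure ?_
        intro z hz
        refine ⟨?_, ?_⟩
        · rcases hz with rfl | rfl | hz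
          · exact hu2
          · exact hu1
          · rw [mem_singleton_iff] at hz; rw [hz]; exact hv1
        · simp only [mem_singleton_iff]
          rintro rfl
          exact hv2mem hz
      exact hB0i.notMem_closure_sdiff_of_mem hv2 (hmono h3)
  -- choose the partition sizes
  set a : ℕ := n / 2 with ha_def
  set b : ℕ := n - a with hb_def
  have hab : a + b = n := by omega
  have ha2 : 2 ≤ a := by omega
  have hb3 : 3 ≤ b := by omega
  obtain ⟨A, hAB0, hAcard⟩ := Set.exists_subset_encard_eq
    (show (a : ℕ∞) ≤ B0.encard by rw [hB0card]; exact_mod_cast (by omega : a ≤ n))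
  set A' : Set α := B0 \ A with hA'def
  have hA'B0 : A' ⊆ B0 := diff_subset
  have hA'E : A' ⊆ M.E := hA'B0.trans hB0E
  have hAE : A ⊆ M.E := hAB0.trans hB0E
  have hdisjAA' : ∀ z, z ∈ A → z ∉ A' := fun z hz hz' => hz'.2 hz
  have hA'card : A'.encard = (b : ℕ∞) := by
    have h1 := Set.encard_diff_add_encard_of_subset hAB0
    rw [hAcard, hB0card] at h1
    have h2 : (b : ℕ∞) + (a : ℕ∞) = (n : ℕ∞) := by exact_mod_cast congrArg (Nat.cast : ℕ → ℕ∞) (by omega : b + a = n)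
    exact WithTop.add_right_cancel (ENat.coe_ne_top a) (h1.trans h2.symm)
  have hAfin : A.Finite := Set.finite_of_encard_eq_coe hAcard
  -- the generating set of points of X on lines of A'
  set T0 : Set α := (fun p : α × α => xf p.1 p.2) '' ((A' ×ˢ A') ∩ {p | p.1 ≠ p.2}) with hT0def
  have hT0X : T0 ⊆ X := by
    rintro z ⟨p, ⟨⟨h1, h2⟩, h3⟩, rfl⟩
    exact hxfX _ _ (hA'B0 h1) (hA'B0 h2) h3
  have hT0E : T0 ⊆ M.E := hT0X.trans hXE
  have hT0clA' : T0 ⊆ M.closure A' := by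
    rintro z ⟨p, ⟨⟨h1, h2⟩, h3⟩, rfl⟩
    refine (M.closure_subset_closure ?_) (hxfcl _ _ (hA'B0 h1) (hA'B0 h2) h3)
    exact insert_subset h1 (singleton_subset_iff.2 h2)
  set G : Set α := A ∪ T0 with hGdef
  have hGE : G ⊆ M.E := union_subset hAE hT0E
  set H : Set α := M.closure G with hHdef
  have hHflat : M.IsFlat H := M.flat_closure G
  have hHE : H ⊆ M.E := M.closure_subset_ground G
  have hGH : G ⊆ H := M.subset_closure G hGE
  have hclH : M.closure H = H := hHflat.closure
  -- key spanning property
  have hkey : ∀ w ∈ A', ∀ T' : Set α, T' ⊆ M.E → (∀ p ∈ A', p ≠ w → xf w p ∈ T') →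
      A' ⊆ M.closure (insert w T') := by
    intro w hw T' hT'E hmem p hp
    by_cases hpw : p = w
    · subst hpw
      exact M.subset_closure _ (insert_subset (hA'E hw) hT'E) (mem_insert _ _)
    · have h1 : p ∈ M.closure {w, xf w p} :=
        hP2 w p (hA'B0 hw) (hA'B0 hp) (fun h => hpw h.symm)
      refine (M.closure_subset_closure ?_) h1
      exact insert_subset (mem_insert _ _)
        (singleton_subset_iff.2 (mem_insert_of_mem _ (hmem p hp hpw)))
  -- rank bounds for H
  have hA'i : M.Indep A' := hB0i.subset hA'B0
  have hA'mrk : M.mrk A' = (b : ℕ∞) := by rw [hA'i.mrk_eq, hA'card]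
  have hclA'mrk : M.mrk (M.closure A') = (b : ℕ∞) := by rw [M.mrk_closure_eq, hA'mrk]
  obtain ⟨w0, hw0⟩ : A'.Nonempty := by
    rw [← Set.encard_pos, hA'card]
    exact_mod_cast Nat.pos_of_ne_zero (by omega)
  -- upper bound
  have hHup : M.mrk H + 1 ≤ (n : ℕ∞) := by
    set F' : Set α := X ∩ M.closure A' with hF'def
    have hF'flat : M.IsFlat F' := hXflat.inter' (M.flat_closure A')
    have hF'E : F' ⊆ M.E := inter_subset_left.trans hXE
    have hw0F' : w0 ∉ F' := fun h => hB0X w0 (hA'B0 hw0) h.1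
    have h1 : M.mrk (insert w0 F') = M.mrk F' + 1 :=
      Matroid.mrk_insert_eq hF'E (hA'E hw0) (by rw [hF'flat.closure]; exact hw0F')
    have h2 : insert w0 F' ⊆ M.closure A' :=
      insert_subset (M.subset_closure A' hA'E hw0) inter_subset_right
    have h3 : M.mrk F' + 1 ≤ (b : ℕ∞) := by
      rw [← h1, ← hclA'mrk]; exact Matroid.mrk_mono h2
    have h4 : M.mrk G ≤ (a : ℕ∞) + M.mrk F' := by
      have hsub : G ⊆ A ∪ F' := by
        refine union_subset subset_union_left (fun z hz => Or.inr ⟨hT0X hz, hT0clA' hz⟩)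
      calc M.mrk G ≤ M.mrk (A ∪ F') := Matroid.mrk_mono hsub
        _ ≤ M.mrk A + M.mrk F' := Matroid.mrk_union_le hAE hF'E
        _ ≤ (a : ℕ∞) + M.mrk F' := by
            refine add_le_add_left ?_ _
            rw [← hAcard]; exact Matroid.mrk_le_encard A
    have h5 : M.mrk H = M.mrk G := M.mrk_closure_eq G
    calc M.mrk H + 1 ≤ ((a : ℕ∞) + M.mrk F') + 1 := by
          rw [h5]; exact add_le_add_left h4 _
      _ = (a : ℕ∞) + (M.mrk F' + 1) := by rw [add_assoc]
      _ ≤ (a : ℕ∞) + (b : ℕ∞) := add_le_add_right h3 _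
      _ = (n : ℕ∞) := by exact_mod_cast congrArg (Nat.cast : ℕ → ℕ∞) hab
  -- lower bound
  have hHlow : (n : ℕ∞) ≤ M.mrk H + 1 := by
    have hT0top : M.mrk T0 ≠ ⊤ :=
      ne_top_of_le_ne_top hEtop (Matroid.mrk_mono hT0E)
    have hbT0 : (b : ℕ∞) ≤ M.mrk T0 + 1 := by
      have h1 : A' ⊆ M.closure (insert w0 T0) := by
        refine hkey w0 hw0 T0 hT0E fun p hp hpw => ?_
        exact ⟨(w0, p), ⟨⟨hw0, hp⟩, fun h => hpw h.symm⟩, rfl⟩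
      have h2 : M.mrk A' ≤ M.mrk (insert w0 T0) := by
        rw [← M.mrk_closure_eq (insert w0 T0)]
        exact Matroid.mrk_mono h1
      have h3 : M.mrk (insert w0 T0) ≤ M.mrk {w0} + M.mrk T0 := by
        rw [show insert w0 T0 = {w0} ∪ T0 from rfl]
        exact Matroid.mrk_union_le (singleton_subset_iff.2 (hA'E hw0)) hT0E
      have h4 : M.mrk {w0} ≤ 1 := (Matroid.mrk_le_encard _).trans_eq (encard_singleton w0)
      rw [← hA'mrk]
      calc M.mrk A' ≤ M.mrk {w0} + M.mrk T0 := h2.trans h3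
        _ ≤ 1 + M.mrk T0 := add_le_add_left h4 _
        _ = M.mrk T0 + 1 := add_comm _ _
    have hsubmod := Matroid.mrk_submod (M := M) G (M.closure A')
    have hunion : (n : ℕ∞) ≤ M.mrk (G ∪ M.closure A') := by
      have hB0sub : B0 ⊆ G ∪ M.closure A' := by
        intro z hz
        by_cases hzA : z ∈ A
        · exact Or.inl (Or.inl hzA)
        · exact Or.inr (M.subset_closure A' hA'E ⟨hz, hzA⟩)
      rw [← hB0card, ← hB0i.mrk_eq]
      exact Matroid.mrk_mono hB0sub
    have hinter : M.mrk T0 ≤ M.mrk (G ∩ M.closure A') :=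
      Matroid.mrk_mono (subset_inter subset_union_right hT0clA')
    have hchain : (n : ℕ∞) + M.mrk T0 ≤ (M.mrk G + 1) + M.mrk T0 := by
      calc (n : ℕ∞) + M.mrk T0 ≤ M.mrk (G ∪ M.closure A') + M.mrk (G ∩ M.closure A') :=
            add_le_add hunion hinter
        _ ≤ M.mrk G + M.mrk (M.closure A') := hsubmod
        _ = M.mrk G + (b : ℕ∞) := by rw [hclA'mrk]
        _ ≤ M.mrk G + (M.mrk T0 + 1) := add_le_add_right hbT0 _
        _ = (M.mrk G + 1) + M.mrk T0 := by rw [← add_assoc, add_right_comm]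
    have := (WithTop.add_le_add_iff_right hT0top).1 hchain
    rwa [show M.mrk H = M.mrk G from M.mrk_closure_eq G]
  have hHne : H ≠ M.E := by
    intro h
    have h1 : M.mrk H = (n : ℕ∞) := by rw [h, hrank]
    rw [h1] at hHup
    have h2 : n + 1 ≤ n := by exact_mod_cast hHup
    omega
  -- adding any point outside H gives a spanning set
  have hHins : ∀ e ∈ M.E \ H, M.Spanning (insert e H) := by
    intro e he
    refine Matroid.spanning_of_mrk_ge (insert_subset he.1 hHE) ?_ hEtop
    rw [Matroid.mrk_insert_eq hHE he.1 (by rw [hclH]; exact he.2), hrank]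
    exact hHlow
  -- every element of H is in the closure of the rest : H has no coloops
  have hccl : ∀ e ∈ H, e ∈ M.closure (H \ {e}) := by
    intro e heH
    by_cases heA : e ∈ A
    · -- use a second element of A
      obtain ⟨i', hi'⟩ : (A \ {e} : Set α).Nonempty := by
        rw [← Set.encard_pos]
        by_contra hcon
        push_neg at hcon
        rw [nonpos_iff_eq_zero, encard_eq_zero, diff_eq_empty] at hcon
        have := (encard_mono hcon).trans_eq (encard_singleton e)
        rw [hAcard] at this
        have : a ≤ 1 := by exact_mod_cast this
        omega
      have hi'A : i' ∈ A := hi'.1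
      have hi'e : i' ≠ e := by simpa using hi'.2
      have h1 : e ∈ M.closure {i', xf i' e} :=
        hP2 i' e (hAB0 hi'A) (hAB0 heA) hi'e
      refine (M.closure_subset_closure ?_) h1
      refine insert_subset ⟨hGH (Or.inl hi'A), by simpa using hi'e⟩ ?_
      refine singleton_subset_iff.2 ⟨?_, ?_⟩
      · -- xf i' e ∈ H
        have h2 : xf i' e ∈ M.closure A :=
          (M.closure_subset_closure (insert_subset hi'A (singleton_subset_iff.2 heA)))
            (hxfcl i' e (hAB0 hi'A) (hAB0 heA) hi'e)
        exact (M.closure_subset_closure subset_union_left) h2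
      · simp only [mem_singleton_iff]
        intro h
        exact hB0X e (hAB0 heA) (h ▸ hxfX i' e (hAB0 hi'A) (hAB0 heA) hi'e)
    · by_cases heT0 : e ∈ T0
      · -- e = xf u v with u, v ∈ A'
        obtain ⟨p, ⟨⟨hpu, hpv⟩, hpne⟩, hpe⟩ := heT0
        set u : α := p.1
        set v : α := p.2
        obtain ⟨w, hw⟩ : (A' \ {u, v} : Set α).Nonempty := by
          rw [← Set.encard_pos]
          by_contra hcon
          push_neg at hcon
          rw [nonpos_iff_eq_zero, encard_eq_zero, diff_eq_empty] at hcon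
          have h2 : A'.encard ≤ 2 := by
            refine (encard_mono hcon).trans ?_
            exact (Set.encard_insert_le _ _).trans (by rw [encard_singleton]; norm_num)
          rw [hA'card] at h2
          have : b ≤ 2 := by exact_mod_cast h2
          omega
        have hwA' : A' ∈ Set.univ → True := fun _ => trivial
        have hwA'mem : w ∈ A' := hw.1
        have hwu : w ≠ u := fun h => hw.2 (h ▸ mem_insert _ _)
        have hwv : w ≠ v := fun h => hw.2 (h ▸ mem_insert_of_mem _ (mem_singleton _))
        set T : Set α := T0 \ {e} with hTdef
        have hTsub : ∀ p' ∈ A', p' ≠ w → xf w p' ∈ T := by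
          intro p' hp' hp'w
          refine ⟨⟨(w, p'), ⟨⟨hwA'mem, hp'⟩, fun h => hp'w h.symm⟩, rfl⟩, ?_⟩
          simp only [mem_singleton_iff]
          rw [← hpe]
          refine hdist w p' u v (hA'B0 hwA'mem) (hA'B0 hp') (hA'B0 hpu) (hA'B0 hpv)
            (fun h => hp'w h.symm) hpne ?_
          intro hset
          have : w ∈ ({u, v} : Set α) := hset ▸ mem_insert _ _
          rcases this with h | h
          · exact hwu h
          · exact hwv (mem_singleton_iff.1 h)
        have hTE : T ⊆ M.E := (diff_subset.trans hT0E)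
        have hA'cl : A' ⊆ M.closure (insert w T) := hkey w hwA'mem T hTE hTsub
        have heclA' : e ∈ M.closure A' := by
          rw [← hpe]
          refine (M.closure_subset_closure ?_) (hxfcl u v (hA'B0 hpu) (hA'B0 hpv) hpne)
          exact insert_subset hpu (singleton_subset_iff.2 hpv)
        have hecl : e ∈ M.closure (insert w T) :=
          Matroid.closure_subset_closure_of_subset_closure hA'cl heclA'
        by_cases hcl : e ∈ M.closure T
        · refine (M.closure_subset_closure ?_) hcl
          exact fun z hz => ⟨hGH (Or.inr hz.1), hz.2⟩
        · exfalso
          have hex := M.closure_exchange (e := e) (f := w) (X := T) ⟨hecl, hcl⟩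
          have h3 : M.closure (insert e T) ⊆ X := by
            rw [← hXflat.closure]
            exact M.closure_subset_closure
              (insert_subset (hT0X (hpe ▸ ⟨p, ⟨⟨hpu, hpv⟩, hpne⟩, rfl⟩)) (diff_subset.trans hT0X))
          exact hB0X w (hA'B0 hwA'mem) (h3 hex.1)
      · -- e is not a generator
        have heG : e ∉ G := fun h => h.elim heA heT0
        refine (M.closure_subset_closure ?_) heH
        exact fun z hz => ⟨hGH hz, by simp only [mem_singleton_iff]; rintro rfl; exact heG hz⟩
  -- the elements of A' lie outside H
  have hA'H : ∀ j ∈ A', j ∉ H := by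
    intro j hj hjH
    have h1 : A' ⊆ M.closure (insert j T0) := by
      refine hkey j hj T0 hT0E fun p hp hpj => ?_
      exact ⟨(j, p), ⟨⟨hj, hp⟩, fun h => hpj h.symm⟩, rfl⟩
    have h2 : M.closure (insert j T0) ⊆ H := by
      rw [← hclH]
      exact M.closure_subset_closure (insert_subset hjH (fun z hz => hGH (Or.inr hz)))
    have hB0H : B0 ⊆ H := by
      intro z hz
      by_cases hzA : z ∈ A
      · exact hGH (Or.inl hzA)
      · exact h2 (h1 ⟨hz, hzA⟩)
    have : M.E ⊆ H := by
      rw [← hB0.closure_eq, ← hclH]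
      exact M.closure_subset_closure hB0H
    exact hHne (hHE.antisymm this)
  -- the cross points lie outside H
  have hxijH : ∀ i ∈ A, ∀ j ∈ A', xf i j ∉ H := by
    intro i hi j hj hmem
    have hij : i ≠ j := fun h => (hdisjAA' i hi) (h ▸ hj)
    have h1 : j ∈ M.closure {i, xf i j} := hP2 i j (hAB0 hi) (hA'B0 hj) hij
    have h2 : ({i, xf i j} : Set α) ⊆ H :=
      insert_subset (hGH (Or.inl hi)) (singleton_subset_iff.2 hmem)
    have : j ∈ H := by
      rw [← hclH]
      exact (M.closure_subset_closure h2) h1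
    exact hA'H j hj this
  -- the cocircuit
  set C : Set α := M.E \ H with hCdef
  have hCE : C ⊆ M.E := diff_subset
  have hcocirc : M.Cocircuit C := by
    rw [Matroid.Cocircuit, Matroid.Circuit]
    constructor
    · -- C is dependent in the dual
      rw [Matroid.dep_iff]
      refine ⟨?_, by rw [Matroid.dual_ground]; exact hCE⟩
      intro hind
      have hco : M.Coindep C := hind
      have hsp := (Matroid.coindep_iff_compl_spanning hCE).1 hco
      rw [hCdef, diff_diff_cancel_left hHE] at hsp
      exact hHne (hHE.antisymm (by rw [← hsp.closure_eq, hclH]))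
    · -- minimality
      intro C' hC' hC'C
      by_contra hnc
      obtain ⟨e, heC, heC'⟩ := not_subset.1 hnc
      have hC'E : C' ⊆ M.E := by
        have := hC'.subset_ground; rwa [Matroid.dual_ground] at this
      have hsub : insert e H ⊆ M.E \ C' := by
        refine insert_subset ⟨heC.1, heC'⟩ fun z hz => ⟨hHE hz, fun hzC' => (hC'C hzC').2 hz⟩
      have hsp : M.Spanning (M.E \ C') := (hHins e heC).superset hsub diff_subset
      have : M.Coindep C' := (Matroid.coindep_iff_compl_spanning hC'E).2 hsp
      exact hC'.not_indep this
  -- C is a flat of the dual matroid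
  have hCflat : M✶.IsFlat C := by
    have hCcl : M✶.closure C = C := by
      refine subset_antisymm ?_ (M✶.subset_closure C (by rw [Matroid.dual_ground]; exact hCE))
      intro f hf
      have hfE : f ∈ M.E := by
        have := M✶.closure_subset_ground C hf
        rwa [Matroid.dual_ground] at this
      by_contra hfC
      have hfH : f ∈ H := by
        by_contra hfH
        exact hfC ⟨hfE, hfH⟩
      obtain ⟨J, hJ⟩ := M✶.exists_isBasis' C
      have hfJcl : f ∈ M✶.closure J := by rw [hJ.closure_eq_closure]; exact hf
      have hJC : J ⊆ C := hJ.subset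
      have hfJ : f ∉ J := fun h => hfC (hJC h)
      have hJco : M.Coindep J := hJ.indep
      have hinsind : M✶.Indep (insert f J) := by
        have hsubE : insert f J ⊆ M.E := insert_subset hfE (hJC.trans hCE)
        have : M.Coindep (insert f J) := by
          rw [Matroid.coindep_iff_compl_spanning hsubE]
          rw [Matroid.spanning_iff_closure_eq diff_subset]
          have h1 : H \ {f} ⊆ M.E \ insert f J := by
            rintro z ⟨hzH, hzf⟩
            refine ⟨hHE hzH, ?_⟩
            rintro (rfl | hzJ)
            · exact hzf rfl
            · exact (hJC hzJ).2 hzH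
          have h2 : f ∈ M.closure (M.E \ insert f J) :=
            (M.closure_subset_closure h1) (hccl f hfH)
          have h3 : M.E \ J ⊆ M.closure (M.E \ insert f J) := by
            intro z hz
            by_cases hzf : z = f
            · exact hzf ▸ h2
            · exact M.subset_closure _ diff_subset ⟨hz.1, by
                rintro (rfl | hzJ)
                · exact hzf rfl
                · exact hz.2 hzJ⟩
          have h4 : M.closure (M.E \ J) = M.E := hJco.closure_compl
          refine subset_antisymm (M.closure_subset_ground _) ?_
          have h5 : M.closure (M.E \ J) ⊆ M.closure (M.E \ insert f J) :=
            Matroid.closure_subset_closure_of_subset_closure h3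
          rw [h4] at h5
          exact h5
        exact this
      exact hfJ ((hJ.indep.mem_closure_iff'.1 hfJcl).2 hinsind)
    have := M✶.flat_closure C
    rwa [hCcl] at this
  -- counting
  set W : Set α := A' ∪ (fun p : α × α => xf p.1 p.2) '' (A ×ˢ A') with hWdef
  have hWC : W ⊆ C := by
    rintro z (hz | ⟨p, ⟨hp1, hp2⟩, rfl⟩)
    · exact ⟨hA'E hz, hA'H z hz⟩
    · have hij : p.1 ≠ p.2 := fun h => (hdisjAA' p.1 hp1) (h ▸ hp2)
      exact ⟨hXE (hxfX _ _ (hAB0 hp1) (hA'B0 hp2) hij), hxijH p.1 hp1 p.2 hp2⟩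
  have hInj : Set.InjOn (fun p : α × α => xf p.1 p.2) (A ×ˢ A') := by
    rintro ⟨i, j⟩ ⟨hi, hj⟩ ⟨i', j'⟩ ⟨hi', hj'⟩ heq
    simp only at heq hi hj hi' hj'
    have hij : i ≠ j := fun h => (hdisjAA' i hi) (h ▸ hj)
    have hij' : i' ≠ j' := fun h => (hdisjAA' i' hi') (h ▸ hj')
    by_cases hset : ({i, j} : Set α) = {i', j'}
    · have hii' : i = i' := by
        have : i ∈ ({i', j'} : Set α) := hset ▸ mem_insert _ _
        rcases this with h | h
        · exact h
        · exact absurd (mem_singleton_iff.1 h ▸ hi) (fun hh => hdisjAA' i hi (mem_singleton_iff.1 h ▸ hj'))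
      have hjj' : j = j' := by
        have : j ∈ ({i', j'} : Set α) := hset ▸ mem_insert_of_mem _ (mem_singleton _)
        rcases this with h | h
        · exact absurd hj (h ▸ fun hh => hdisjAA' i' hi' hh)
        · exact mem_singleton_iff.1 h
      exact Prod.ext hii' hjj'
    · exact absurd heq (hdist i j i' j' (hAB0 hi) (hA'B0 hj) (hAB0 hi') (hA'B0 hj') hij hij' hset)
  have hWcard : W.encard = ((b + a * b : ℕ) : ℕ∞) := by
    have hdisjW : Disjoint A' ((fun p : α × α => xf p.1 p.2) '' (A ×ˢ A')) := by
      rw [disjoint_left]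
      intro z hz hzimg
      obtain ⟨p, ⟨hp1, hp2⟩, heq⟩ := hzimg
      have hij : p.1 ≠ p.2 := fun h => (hdisjAA' p.1 hp1) (h ▸ hp2)
      exact hB0X z (hA'B0 hz) (heq ▸ hxfX _ _ (hAB0 hp1) (hA'B0 hp2) hij)
    rw [hWdef, encard_union_eq hdisjW, hInj.encard_image, Matroid.encard_sprod hAfin,
      hA'card, hAcard]
    push_cast
    ring
  -- the numerical bound
  have hceil : ⌈(n * (n + 2) : ℚ) / 4⌉₊ ≤ b + a * b := by
    rw [Nat.ceil_le]
    rw [div_le_iff₀ (by norm_num : (0:ℚ) < 4)]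
    have hnat : n * (n + 2) ≤ (b + a * b) * 4 := by
      rcases Nat.even_or_odd n with ⟨k, hk⟩ | ⟨k, hk⟩
      · have hak : a = k := by omega
        have hbk : b = k := by omega
        rw [hak, hbk, hk]
        nlinarith
      · have hak : a = k := by omega
        have hbk : b = k + 1 := by omega
        rw [hak, hbk, hk]
        nlinarith
    exact_mod_cast hnat
  refine ⟨C, hcocirc, ?_, hCflat⟩
  calc ((⌈(n * (n + 2) : ℚ) / 4⌉₊ : ℕ) : ℕ∞) ≤ ((b + a * b : ℕ) : ℕ∞) := by
        exact_mod_cast hceil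
    _ = W.encard := hWcard.symm
    _ ≤ C.encard := encard_mono hWC
end

section
/- Let 𝒜 be an essential central arrangement in 𝕜^n whose set of defining linear forms contains the coordinate forms x_1,…,x_n. Suppose X is a modular copoint of the matroid of 𝒜 such that every form lying in X vanishes at the point (1,1,…,1), and none of x_1,…,x_n lies in X. Then for every pair 1 ≤ i < j ≤ n, the hyperplane ker(x_i − x_j) belongs to 𝒜; in particular 𝒜 contains the subarrangement {ker(x_i) : 1 ≤ i ≤ n} ∪ {ker(x_i − x_j) : 1 ≤ i < j ≤ n}, which is isomorphic to the graphic arrangement of K_{n+1}. -/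
open Set Submodule

/-- The linear matroid on a finite set `E` of vectors in a `𝕜`-vector space `W`:
a set is independent iff it is a linearly independent subset of `E`. -/
noncomputable def vecMatroid (𝕜 : Type) {W : Type} [Field 𝕜] [AddCommGroup W] [Module 𝕜 W]
    (E : Set W) (hE : E.Finite) : Matroid W :=
  (IndepMatroid.ofFinite hE
    (fun I => I ⊆ E ∧ LinearIndependent 𝕜 (fun x : I => (x : W)))
    ⟨Set.empty_subset _, linearIndependent_empty_type⟩
    (fun I J hJ hIJ => ⟨hIJ.trans hJ.1, (show LinearIndepOn 𝕜 id J from hJ.2).mono hIJ⟩)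
    (by
      rintro I J ⟨hIE, hI⟩ ⟨hJE, hJ⟩ hlt
      by_contra hcon
      push_neg at hcon
      have hspan : J ⊆ (span 𝕜 I : Submodule 𝕜 W) := by
        intro e he
        by_cases heI : e ∈ I
        · exact subset_span heI
        · by_contra hesp
          have key : insert e I ⊆ E ∧ LinearIndependent 𝕜 (fun x : (insert e I : Set W) => (x : W)) :=
            ⟨insert_subset (hJE he) hIE, LinearIndepOn.id_insert (show LinearIndepOn 𝕜 id I from hI) hesp⟩
          first
            | exact (hcon e he heI) key
            | exact (hcon e he heI) key.1 key.2
      have hfinI : I.Finite := hE.subset hIE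
      have hfinJ : J.Finite := hE.subset hJE
      letI := hfinI.fintype
      letI := hfinJ.fintype
      have hle : Fintype.card J ≤ Fintype.card I := by
        refine linearIndependent_le_span_aux' (fun x : J => (x : W)) hJ I ?_
        rwa [Subtype.range_coe]
      rw [Set.ncard_eq_toFinset_card' I, Set.ncard_eq_toFinset_card' J,
        Set.toFinset_card, Set.toFinset_card] at hlt
      omega)
    (fun I hI => hI.1)).matroid

/-- The matroid of a central arrangement: the linear matroid on its set of defining
linear forms. -/
noncomputable def arrMatroid {𝕜 : Type} [Field 𝕜] {n : ℕ}
    (A : Finset (MvPolynomial (Fin n) 𝕜)) : Matroid (MvPolynomial (Fin n) 𝕜) :=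
  vecMatroid 𝕜 (↑A) A.finite_toSet

section helpers

variable {α : Type} {M : Matroid α} {I X Y : Set α} {k : ℕ∞}

lemma le_mrk' (hI : M.Indep I) (hIX : I ⊆ X) : I.encard ≤ M.mrk X :=
  le_biSup _ ⟨hI, hIX⟩

lemma mrk_mono' (M : Matroid α) (h : X ⊆ Y) : M.mrk X ≤ M.mrk Y :=
  iSup₂_le fun I hI => le_biSup _ ⟨hI.1, hI.2.trans h⟩

lemma exists_of_lt_mrk (h : k < M.mrk X) : ∃ I, M.Indep I ∧ I ⊆ X ∧ k < I.encard := by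
  by_contra hc
  push_neg at hc
  exact h.not_ge (iSup₂_le fun I hI => hc I hI.1 hI.2)

end helpers

section arr

variable {𝕜 : Type} [Field 𝕜] {n : ℕ} {A : Finset (MvPolynomial (Fin n) 𝕜)}

lemma arr_indep_iff {I : Set (MvPolynomial (Fin n) 𝕜)} :
    (arrMatroid A).Indep I ↔ I ⊆ ↑A ∧
      LinearIndependent 𝕜 (fun x : I => (x : MvPolynomial (Fin n) 𝕜)) := by
  simp [arrMatroid, vecMatroid]

lemma arr_ground : (arrMatroid A).E = ↑A := by
  simp [arrMatroid, vecMatroid]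

/-- If `e ∈ A` lies in the linear span of an independent set `I`, then `e` lies in the
matroid closure of `I`. -/
lemma mem_closure_of_mem_span {I : Set (MvPolynomial (Fin n) 𝕜)}
    (hI : (arrMatroid A).Indep I) {e : MvPolynomial (Fin n) 𝕜} (heA : e ∈ (A : Set _))
    (hes : e ∈ span 𝕜 I) : e ∈ (arrMatroid A).closure I := by
  obtain ⟨hIA, hIli⟩ := arr_indep_iff.mp hI
  by_cases heI : e ∈ I
  · exact Or.inr heI |> hI.mem_closure_iff.mpr
  refine hI.mem_closure_iff.mpr (Or.inl ?_)
  rw [Matroid.dep_iff]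
  refine ⟨fun hind => ?_, ?_⟩
  · exact ((linearIndepOn_id_insert heI).mp (arr_indep_iff.mp hind).2).2 hes
  · rw [arr_ground]
    exact insert_subset heA hIA

end arr

/-- Let `𝒜` be an essential central arrangement in `𝕜ⁿ` whose defining forms include the
coordinate forms `x₁, …, xₙ`.  Suppose `F` is a modular copoint of the matroid of `𝒜` such
that every form in `F` vanishes at `(1,1,…,1)` and no coordinate form lies in `F`.  Then for
every `i < j` the hyperplane `ker(xᵢ - xⱼ)` belongs to `𝒜`, i.e. some nonzero scalar multiple
of `xᵢ - xⱼ` is a defining form of `𝒜`; together with the coordinate hyperplanes these form a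
subarrangement isomorphic to the graphic arrangement of `K_{n+1}`. -/
theorem modular_copoint_gives_braid_subarrangement {𝕜 : Type} [Field 𝕜] {n : ℕ}
    (A : Finset (MvPolynomial (Fin n) 𝕜))
    (hhom : ∀ l ∈ A, l.IsHomogeneous 1)
    (hne : ∀ l ∈ A, l ≠ 0)
    (hprop : ∀ l ∈ A, ∀ l' ∈ A, (∃ c : 𝕜, l' = c • l) → l' = l)
    (hess : (arrMatroid A).mrk ↑A = (n : ℕ∞))
    (hcoord : ∀ i : Fin n, MvPolynomial.X i ∈ A)
    (F : Set (MvPolynomial (Fin n) 𝕜))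
    (hFflat : (arrMatroid A).IsFlat F)
    (hFrank : (arrMatroid A).mrk F = ((n - 1 : ℕ) : ℕ∞))
    (hFmod : ∀ Y, (arrMatroid A).IsFlat Y →
      (arrMatroid A).mrk (F ∪ Y) + (arrMatroid A).mrk (F ∩ Y) =
        (arrMatroid A).mrk F + (arrMatroid A).mrk Y)
    (hvanish : ∀ l ∈ F, MvPolynomial.eval (fun _ => (1 : 𝕜)) l = 0)
    (hcoordnot : ∀ i : Fin n, MvPolynomial.X i ∉ F) :
    ∀ i j : Fin n, i < j → ∃ c : 𝕜, c ≠ 0 ∧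
      c • (MvPolynomial.X i - MvPolynomial.X j) ∈ A := by
  intro i j hij
  have hn : 0 < n := i.pos
  set M := arrMatroid A with hM
  have hFA : F ⊆ (A : Set _) := arr_ground (A := A) ▸ hFflat.subset_ground
  -- a maximal independent subset of F
  obtain ⟨I, hIindep, hIF, hIcard⟩ :
      ∃ I, M.Indep I ∧ I ⊆ F ∧ I.encard = ((n - 1 : ℕ) : ℕ∞) := by
    rcases Nat.eq_zero_or_pos (n - 1) with h0 | hpos
    · exact ⟨∅, M.empty_indep, empty_subset _, by simp [h0]⟩
    · have hlt : ((n - 2 : ℕ) : ℕ∞) < M.mrk F := by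
        rw [hFrank]
        exact Nat.cast_lt.mpr (by omega)
      obtain ⟨I, h1, h2, h3⟩ := exists_of_lt_mrk hlt
      have hle : I.encard ≤ ((n - 1 : ℕ) : ℕ∞) := hFrank ▸ le_mrk' h1 h2
      refine ⟨I, h1, h2, le_antisymm hle ?_⟩
      have h4 := Order.add_one_le_of_lt h3
      calc ((n - 1 : ℕ) : ℕ∞) = ((n - 2 : ℕ) : ℕ∞) + 1 := by norm_cast; omega
        _ ≤ I.encard := h4
  obtain ⟨hIA, hIli⟩ := arr_indep_iff.mp hIindep
  -- X i is not in the span of I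
  have hXi_nspan : MvPolynomial.X i ∉ span 𝕜 I := by
    intro hmem
    have h1 : MvPolynomial.X i ∈ M.closure I :=
      mem_closure_of_mem_span hIindep (hcoord i) hmem
    have h2 : M.closure I ⊆ M.closure F := M.closure_subset_closure hIF
    rw [hFflat.closure] at h2
    exact hcoordnot i (h2 h1)
  have hXi_nI : MvPolynomial.X i ∉ I := fun h => hXi_nspan (subset_span h)
  -- J = insert (X i) I is independent of size n
  set J := insert (MvPolynomial.X i) I with hJ
  have hJindep : M.Indep J :=
    arr_indep_iff.mpr ⟨insert_subset (hcoord i) hIA, LinearIndepOn.id_insert (show LinearIndepOn 𝕜 id I from hIli) hXi_nspan⟩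
  have hJcard : J.encard = (n : ℕ∞) := by
    rw [hJ, Set.encard_insert_of_notMem hXi_nI, hIcard]
    norm_cast; omega
  -- the flat Y
  set Y : Set (MvPolynomial (Fin n) 𝕜) :=
    (A : Set _) ∩ ((span 𝕜 {MvPolynomial.X i, MvPolynomial.X j} :
      Submodule 𝕜 (MvPolynomial (Fin n) 𝕜)) : Set _) with hYdef
  have hYA : Y ⊆ (A : Set _) := inter_subset_left
  have hYflat : M.IsFlat Y := by
    refine ⟨?_, arr_ground (A := A) ▸ hYA⟩
    intro I' X' hI'Y hI'X' e heX'
    have heA : e ∈ (A : Set _) := arr_ground (A := A) ▸ hI'X'.subset_ground heX'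
    have heC : e ∈ M.closure I' := hI'X'.subset_closure heX'
    obtain ⟨hI'A, hI'li⟩ := arr_indep_iff.mp hI'Y.indep
    rcases hI'Y.indep.mem_closure_iff.mp heC with hdep | hmem
    · by_cases heI' : e ∈ I'
      · exact hI'Y.subset heI'
      have hespan : e ∈ span 𝕜 I' := by
        by_contra h
        exact hdep.not_indep
          (arr_indep_iff.mpr ⟨insert_subset heA hI'A, LinearIndepOn.id_insert (show LinearIndepOn 𝕜 id I' from hI'li) h⟩)
      have hle : span 𝕜 I' ≤ span 𝕜 {MvPolynomial.X i, MvPolynomial.X j} :=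
        span_le.mpr fun x hx => (hI'Y.subset hx).2
      exact ⟨heA, hle hespan⟩
    · exact hI'Y.subset hmem
  -- X i ≠ X j and their linear independence
  have hijne : (MvPolynomial.X i : MvPolynomial (Fin n) 𝕜) ≠ MvPolynomial.X j :=
    fun h => hij.ne (MvPolynomial.X_injective h)
  have hXi_nspanj : (MvPolynomial.X i : MvPolynomial (Fin n) 𝕜) ∉
      span 𝕜 {(MvPolynomial.X j : MvPolynomial (Fin n) 𝕜)} := by
    intro hm
    obtain ⟨a, ha⟩ := mem_span_singleton.mp hm
    have := congrArg (MvPolynomial.coeff (Finsupp.single i 1)) ha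
    simp [MvPolynomial.coeff_X', MvPolynomial.coeff_smul, Finsupp.single_eq_single_iff,
      hij.ne, (hij.ne.symm : j ≠ i)] at this
  have hpairli : LinearIndependent 𝕜
      (fun x : ({MvPolynomial.X i, MvPolynomial.X j} :
        Set (MvPolynomial (Fin n) 𝕜)) => (x : MvPolynomial (Fin n) 𝕜)) := by
    refine (linearIndepOn_id_insert (by simpa using hijne)).mpr
      ⟨LinearIndepOn.singleton (v := id) (MvPolynomial.X_ne_zero j), hXi_nspanj⟩
  -- mrk Y = 2
  have hYrank : M.mrk Y = 2 := by
    refine le_antisymm ?_ ?_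
    · refine iSup₂_le ?_
      rintro I' ⟨hI'indep, hI'Y⟩
      obtain ⟨hI'A, hI'li⟩ := arr_indep_iff.mp hI'indep
      have hfin : I'.Finite := A.finite_toSet.subset hI'A
      letI := hfin.fintype
      letI := Classical.decEq (MvPolynomial (Fin n) 𝕜)
      have hled := linearIndependent_le_span_aux'
        (fun x : I' => (x : MvPolynomial (Fin n) 𝕜)) hI'li
        ({MvPolynomial.X i, MvPolynomial.X j} : Set (MvPolynomial (Fin n) 𝕜))
        (by rw [Subtype.range_coe]; exact fun x hx => (hI'Y hx).2)
      calc I'.encard = (Fintype.card I' : ℕ∞) := by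
            rw [Set.encard_eq_coe_toFinset_card, Set.toFinset_card]
        _ ≤ (Fintype.card ({MvPolynomial.X i, MvPolynomial.X j} :
              Set (MvPolynomial (Fin n) 𝕜)) : ℕ∞) := Nat.cast_le.mpr hled
        _ = ({MvPolynomial.X i, MvPolynomial.X j} :
              Set (MvPolynomial (Fin n) 𝕜)).encard := by
            rw [Set.encard_eq_coe_toFinset_card, Set.toFinset_card]
        _ = 2 := Set.encard_pair hijne
    · have hsub : ({MvPolynomial.X i, MvPolynomial.X j} :
          Set (MvPolynomial (Fin n) 𝕜)) ⊆ Y := by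
        rintro x (rfl | rfl)
        · exact ⟨hcoord i, subset_span (by simp)⟩
        · exact ⟨hcoord j, subset_span (by simp)⟩
      have hind : M.Indep {MvPolynomial.X i, MvPolynomial.X j} :=
        arr_indep_iff.mpr ⟨(by rintro x (rfl | rfl); exacts [hcoord i, hcoord j]), hpairli⟩
      have := le_mrk' hind hsub
      rwa [Set.encard_pair hijne] at this
  -- mrk (F ∪ Y) = n
  have hFYrank : M.mrk (F ∪ Y) = (n : ℕ∞) := by
    refine le_antisymm ?_ ?_
    · have h1 : M.mrk (F ∪ Y) ≤ M.mrk ↑A := mrk_mono' M (union_subset hFA hYA)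
      rwa [hess] at h1
    · have hJsub : J ⊆ F ∪ Y := by
        rw [hJ]
        refine insert_subset (Or.inr ⟨hcoord i, subset_span (by simp)⟩)
          (hIF.trans subset_union_left)
      have := le_mrk' hJindep hJsub
      rwa [hJcard] at this
  -- modularity gives mrk (F ∩ Y) = 1
  have hmodeq := hFmod Y hYflat
  rw [hFYrank, hFrank, hYrank] at hmodeq
  have hrhs : ((n - 1 : ℕ) : ℕ∞) + 2 = (n : ℕ∞) + 1 := by norm_cast; omega
  rw [hrhs] at hmodeq
  have hFYint : M.mrk (F ∩ Y) = 1 :=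
    WithTop.add_left_cancel (by simp : (n : ℕ∞) ≠ ⊤) hmodeq
  -- extract a nonzero element of F ∩ Y
  have hpos : (0 : ℕ∞) < M.mrk (F ∩ Y) := by rw [hFYint]; norm_num
  obtain ⟨I₀, hI₀indep, hI₀sub, hI₀pos⟩ := exists_of_lt_mrk hpos
  obtain ⟨l, hl⟩ := Set.encard_pos.mp hI₀pos
  obtain ⟨hlF, hlA', hlspan⟩ : l ∈ F ∧ l ∈ (A : Set _) ∧
      l ∈ span 𝕜 {MvPolynomial.X i, MvPolynomial.X j} := by
    obtain ⟨h1, h2, h3⟩ := hI₀sub hl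
    exact ⟨h1, h2, h3⟩
  have hlne : l ≠ 0 := hne l hlA'
  obtain ⟨a, b, hab⟩ := mem_span_pair.mp hlspan
  have hval := hvanish l hlF
  rw [← hab] at hval
  simp [MvPolynomial.smul_eval] at hval
  -- hval : a + b = 0
  have hb : b = -a := by linear_combination hval
  have hl_eq : l = a • (MvPolynomial.X i - MvPolynomial.X j) := by
    rw [← hab, hb]
    module
  refine ⟨a, ?_, hl_eq ▸ hlA'⟩
  intro ha0
  rw [ha0, zero_smul] at hl_eq
  exact hlne hl_eq
end
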